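/- arXiv:1202.5573 — 5 statements merged into one kernel-verified Lean document; each statement's English description precedes it below -/
import Mathlib

section
/- Let N be a positive integer and r > 0. If the sequence φ : ℕ → ℝ belongs to the class W(r), then the sequence Φ defined by Φ(n) = φ(N·n) belongs to the class W(r^N). -/
/-!
The ratio and summability conditions pass to `Φ(n) = φ(N n)` directly:
`φ(Nn - N)/φ(Nn)` is a product of `N` consecutive ratios, and `Σ Φ(i) r^{-Ni}` is a subseries.
For the convolution condition, the sum defining it for `Φ` at `(m, n)` is a subsum of the one
for `φ` at `(Nm, Nn)`. Conversely, since consecutive ratios of `φ` are bounded, indices of the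
`φ`-sum at `n` group into blocks of length `N`, each comparable to one term of the `Φ`-sum at
`⌊n/N⌋`, so the `φ`-sums are bounded whenever the `Φ`-sums are.
-/

open Filter Topology

/-- The class `W(r)` of weight sequences. -/
def ClassW (r : ℝ) (γ : ℕ → ℝ) : Prop :=
  (∀ n, 0 < γ n) ∧
  Tendsto (fun n => γ (n - 1) / γ n) atTop (𝓝 (1 / r)) ∧
  Summable (fun i => γ i / r ^ i) ∧
  Tendsto
    (fun m => limsup (fun n => (∑ i ∈ Finset.Icc m (n - m), γ (n - i) * γ i) / γ n) atTop)
    atTop (𝓝 0)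

open Finset

lemma limsup_nonneg_of_nonneg {α : Type*} {l : Filter α} [l.NeBot] {u : α → ℝ}
    (hu : 0 ≤ u) : 0 ≤ limsup u l := by
  by_cases hb : IsBoundedUnder (· ≤ ·) l u
  · exact le_limsup_of_frequently_le (Frequently.of_forall hu) hb
  · rw [Real.limsup_of_not_isBoundedUnder hb]

/-- On `ℝ` the limsup of an unbounded sequence is the junk value `0`, so monotonicity of `limsup`
needs the larger function `v` to be bounded whenever `u` is: that is what `hbdd` provides. -/
lemma limsup_le_limsup_of_le_comp {α β : Type*} {l : Filter α} {l' : Filter β} [l.NeBot]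
    [l'.NeBot] {u : α → ℝ} {v : β → ℝ} {f : α → β} (hu : 0 ≤ u) (hv : 0 ≤ v)
    (hf : Tendsto f l l') (huv : ∀ a, u a ≤ v (f a))
    (hbdd : IsBoundedUnder (· ≤ ·) l u → IsBoundedUnder (· ≤ ·) l' v) :
    limsup u l ≤ limsup v l' := by
  by_cases hb : IsBoundedUnder (· ≤ ·) l u
  · calc limsup u l ≤ limsup (v ∘ f) l :=
          limsup_le_limsup (.of_forall huv) (isCoboundedUnder_le_of_le l hu)
            (hf.isBoundedUnder_comp (hbdd hb))
      _ ≤ limsup v l' := hf.limsup_comp_le_limsup (isCoboundedUnder_le_of_le _ hv) (hbdd hb)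
  · rw [Real.limsup_of_not_isBoundedUnder hb]
    exact limsup_nonneg_of_nonneg hv

lemma Finset.sum_comp_le_nsmul_sum {ι κ M : Type*} [DecidableEq κ] [AddCommMonoid M]
    [PartialOrder M] [IsOrderedAddMonoid M] {s : Finset ι} {t : Finset κ} {f : ι → κ}
    {ψ : κ → M} (hψ : ∀ b ∈ t, 0 ≤ ψ b) (hf : ∀ a ∈ s, f a ∈ t) (n : ℕ)
    (hn : ∀ b ∈ t, #{a ∈ s | f a = b} ≤ n) :
    ∑ a ∈ s, ψ (f a) ≤ n • ∑ b ∈ t, ψ b := by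
  calc ∑ a ∈ s, ψ (f a) = ∑ b ∈ t, ∑ a ∈ s with f a = b, ψ (f a) :=
        (sum_fiberwise_of_maps_to hf _).symm
    _ = ∑ b ∈ t, #{a ∈ s | f a = b} • ψ b := by
        refine sum_congr rfl fun b _ => ?_
        rw [← sum_const]
        exact sum_congr rfl fun a ha => by rw [(mem_filter.1 ha).2]
    _ ≤ ∑ b ∈ t, n • ψ b := sum_le_sum fun b hb => nsmul_le_nsmul_left (hψ b hb) (hn b hb)
    _ = n • ∑ b ∈ t, ψ b := (smul_sum ..).symm

lemma Nat.mul_div_le_and_lt_mul_div_add {N : ℕ} (hN : 0 < N) (i : ℕ) :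
    N * (i / N) ≤ i ∧ i < N * (i / N) + N :=
  ⟨Nat.mul_div_le i N, by simpa [mul_add] using Nat.lt_mul_div_succ i hN⟩

lemma Nat.card_filter_div_eq_le {N : ℕ} (hN : 0 < N) (s : Finset ℕ) (q : ℕ) :
    #{i ∈ s | i / N = q} ≤ N :=
  calc #{i ∈ s | i / N = q} ≤ #(Ico (N * q) (N * q + N)) := by
        refine card_le_card fun i hi => ?_
        rw [mem_Ico, ← (mem_filter.1 hi).2]
        exact Nat.mul_div_le_and_lt_mul_div_add hN i
    _ = N := by simp

section PositiveSequence

variable {φ : ℕ → ℝ}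

lemma tendsto_div_sub_of_tendsto_div_sub_one (hpos : ∀ n, 0 < φ n) {c : ℝ}
    (h : Tendsto (fun n => φ (n - 1) / φ n) atTop (𝓝 c)) (k : ℕ) :
    Tendsto (fun n => φ (n - k) / φ n) atTop (𝓝 (c ^ k)) := by
  induction k with
  | zero => simp [div_self (hpos _).ne']
  | succ k ih =>
    rw [pow_succ]
    refine ((ih.comp (tendsto_sub_atTop_nat 1)).mul h).congr fun n => ?_
    rw [Function.comp_apply, div_mul_div_cancel₀ (hpos _).ne', Nat.sub_sub, Nat.add_comm]

lemma le_pow_sub_mul_and_le_pow_sub_mul {D : ℝ} (hD : 0 ≤ D)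
    (hstep : ∀ n, φ n ≤ D * φ (n + 1) ∧ φ (n + 1) ≤ D * φ n) {j k : ℕ}
    (hjk : j ≤ k) :
    φ j ≤ D ^ (k - j) * φ k ∧ φ k ≤ D ^ (k - j) * φ j := by
  induction k, hjk using Nat.le_induction with
  | base => simp
  | succ k hjk ih =>
    rw [Nat.sub_add_comm hjk, pow_succ]
    constructor
    · calc φ j ≤ D ^ (k - j) * φ k := ih.1
        _ ≤ D ^ (k - j) * (D * φ (k + 1)) := by gcongr; exact (hstep k).1
        _ = _ := by ring
    · calc φ (k + 1) ≤ D * φ k := (hstep k).2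
        _ ≤ D * (D ^ (k - j) * φ j) := by gcongr; exact ih.2
        _ = _ := by ring

lemma exists_le_mul_of_tendsto_div_sub_one (hpos : ∀ n, 0 < φ n) {c : ℝ} (hc : c ≠ 0)
    (h : Tendsto (fun n => φ (n - 1) / φ n) atTop (𝓝 c)) (d : ℕ) :
    ∃ E, 0 < E ∧ ∀ j k, j ≤ k + d → k ≤ j + d → φ j ≤ E * φ k := by
  have hdown : Tendsto (fun n => φ n / φ (n + 1)) atTop (𝓝 c) := by
    refine (h.comp (tendsto_add_atTop_nat 1)).congr fun n => ?_
    simp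
  obtain ⟨C₁, hC₁⟩ := hdown.bddAbove_range
  obtain ⟨C₂, hC₂⟩ := (hdown.inv₀ hc).bddAbove_range
  set D := max 1 (max C₁ C₂)
  have hD : 1 ≤ D := le_max_left _ _
  have hstep : ∀ n, φ n ≤ D * φ (n + 1) ∧ φ (n + 1) ≤ D * φ n := fun n => by
    have h₁ : φ n / φ (n + 1) ≤ D := (hC₁ ⟨n, rfl⟩).trans (by simp [D])
    have h₂ : φ (n + 1) / φ n ≤ D := by
      simpa using (hC₂ ⟨n, rfl⟩).trans (show C₂ ≤ D by simp [D])
    exact ⟨(div_le_iff₀ (hpos _)).1 h₁, (div_le_iff₀ (hpos _)).1 h₂⟩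
  have hD₀ : 0 ≤ D := zero_le_one.trans hD
  refine ⟨D ^ d, by positivity, fun j k hjk hkj => ?_⟩
  rcases le_total j k with hle | hle
  · calc φ j ≤ D ^ (k - j) * φ k := (le_pow_sub_mul_and_le_pow_sub_mul hD₀ hstep hle).1
      _ ≤ D ^ d * φ k :=
          mul_le_mul_of_nonneg_right (pow_le_pow_right₀ hD (by omega)) (hpos k).le
  · calc φ j ≤ D ^ (j - k) * φ k := (le_pow_sub_mul_and_le_pow_sub_mul hD₀ hstep hle).2
      _ ≤ D ^ d * φ k :=
          mul_le_mul_of_nonneg_right (pow_le_pow_right₀ hD (by omega)) (hpos k).le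

end PositiveSequence

noncomputable def convRatio (γ : ℕ → ℝ) (m n : ℕ) : ℝ :=
  (∑ i ∈ Icc m (n - m), γ (n - i) * γ i) / γ n

section ConvRatio

variable {φ : ℕ → ℝ} {N : ℕ}

lemma convRatio_nonneg (hφ : ∀ n, 0 ≤ φ n) (m n : ℕ) : 0 ≤ convRatio φ m n :=
  div_nonneg (sum_nonneg fun _ _ => mul_nonneg (hφ _) (hφ _)) (hφ n)

lemma convRatio_comp_mul_le (hN : 0 < N) (hφ : ∀ n, 0 ≤ φ n) (m n : ℕ) :
    convRatio (fun n => φ (N * n)) m n ≤ convRatio φ (N * m) (N * n) := by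
  refine div_le_div_of_nonneg_right ?_ (hφ _)
  calc ∑ i ∈ Icc m (n - m), φ (N * (n - i)) * φ (N * i)
      = ∑ j ∈ (Icc m (n - m)).image (N * ·), φ (N * n - j) * φ j := by
        rw [sum_image fun a _ b _ hab => mul_right_injective₀ hN.ne' hab]
        simp only [Nat.mul_sub]
    _ ≤ ∑ j ∈ Icc (N * m) (N * n - N * m), φ (N * n - j) * φ j := by
        refine sum_le_sum_of_subset_of_nonneg ?_ fun _ _ _ => mul_nonneg (hφ _) (hφ _)
        simp only [subset_iff, mem_image, mem_Icc]
        rintro _ ⟨i, ⟨hmi, hin⟩, rfl⟩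
        exact ⟨Nat.mul_le_mul_left N hmi, Nat.mul_sub N n m ▸ Nat.mul_le_mul_left N hin⟩

lemma convRatio_le_mul_convRatio_comp_mul (hN : 0 < N) (hpos : ∀ n, 0 < φ n) {E : ℝ}
    (hE : 0 < E) (hnear : ∀ j k, j ≤ k + N → k ≤ j + N → φ j ≤ E * φ k) (m n : ℕ) :
    convRatio φ (N * m) n ≤ N * E ^ 3 * convRatio (fun n => φ (N * n)) m (n / N) := by
  set ψ : ℕ → ℝ := fun q => E ^ 3 * (φ (N * (n / N - q)) * φ (N * q) / φ (N * (n / N)))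
  have hψ : ∀ q, 0 ≤ ψ q := fun q => by
    positivity [hpos (N * (n / N - q)), hpos (N * q), hpos (N * (n / N))]
  have hterm : ∀ i ∈ Icc (N * m) (n - N * m), φ (n - i) * φ i / φ n ≤ ψ (i / N) := by
    intro i hi
    have hi := mem_Icc.1 hi
    obtain ⟨hp₁, hp₂⟩ := Nat.mul_div_le_and_lt_mul_div_add hN n
    obtain ⟨hq₁, hq₂⟩ := Nat.mul_div_le_and_lt_mul_div_add hN i
    have hsub : N * (n / N - i / N) = N * (n / N) - N * (i / N) := Nat.mul_sub N (n / N) (i / N)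
    have h₁ : φ (n - i) ≤ E * φ (N * (n / N - i / N)) := hnear _ _ (by omega) (by omega)
    have h₂ : φ i ≤ E * φ (N * (i / N)) := hnear _ _ (by omega) (by omega)
    have h₃ : φ (N * (n / N)) ≤ E * φ n := hnear _ _ (by omega) (by omega)
    rw [div_le_iff₀ (hpos n)]
    calc φ (n - i) * φ i ≤ (E * φ (N * (n / N - i / N))) * (E * φ (N * (i / N))) :=
          mul_le_mul h₁ h₂ (hpos _).le (by positivity [hpos (N * (n / N - i / N))])
      _ = ψ (i / N) * φ (N * (n / N)) / E := by
          simp only [ψ]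
          field_simp [(hpos (N * (n / N))).ne']
      _ ≤ ψ (i / N) * φ n := by
          rw [div_le_iff₀ hE]
          linarith [mul_le_mul_of_nonneg_left h₃ (hψ (i / N))]
  have hblock : ∀ i ∈ Icc (N * m) (n - N * m), i / N ∈ Icc m (n / N - m) := by
    intro i hi
    obtain ⟨hmi, hin⟩ := mem_Icc.1 hi
    exact mem_Icc.2 ⟨(Nat.le_div_iff_mul_le hN).2 (by linarith),
      Nat.sub_mul_div n N m ▸ Nat.div_le_div_right hin⟩
  calc convRatio φ (N * m) n = ∑ i ∈ Icc (N * m) (n - N * m), φ (n - i) * φ i / φ n :=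
        sum_div _ _ _
    _ ≤ ∑ i ∈ Icc (N * m) (n - N * m), ψ (i / N) := sum_le_sum hterm
    _ ≤ N • ∑ q ∈ Icc m (n / N - m), ψ q :=
        sum_comp_le_nsmul_sum (fun q _ => hψ q) hblock N fun q _ =>
          Nat.card_filter_div_eq_le hN _ q
    _ = N * E ^ 3 * convRatio (fun n => φ (N * n)) m (n / N) := by
        simp only [ψ, convRatio, nsmul_eq_mul, ← mul_sum, ← sum_div]
        ring

lemma limsup_convRatio_comp_mul_le (hN : 0 < N) (hpos : ∀ n, 0 < φ n) {E : ℝ} (hE : 0 < E)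
    (hnear : ∀ j k, j ≤ k + N → k ≤ j + N → φ j ≤ E * φ k) (m : ℕ) :
    limsup (convRatio (fun n => φ (N * n)) m) atTop ≤ limsup (convRatio φ (N * m)) atTop := by
  have hnonneg : ∀ n, 0 ≤ φ n := fun n => (hpos n).le
  refine limsup_le_limsup_of_le_comp (convRatio_nonneg (fun _ => hnonneg _) m)
    (convRatio_nonneg hnonneg _) (tendsto_id.const_mul_atTop' hN)
    (convRatio_comp_mul_le hN hnonneg m) fun hbdd => ?_
  obtain ⟨B, hB⟩ := hbdd.eventually_le
  refine isBoundedUnder_of_eventually_le (a := N * E ^ 3 * B) ?_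
  filter_upwards [(Nat.tendsto_div_const_atTop hN.ne').eventually hB] with n hn
  exact (convRatio_le_mul_convRatio_comp_mul hN hpos hE hnear m n).trans (by gcongr)

end ConvRatio

/-- If `φ ∈ W(r)` then `Φ(n) = φ(N n)` is in `W(r^N)`. -/
theorem stmt0 (N : ℕ) (hN : 0 < N) (r : ℝ) (hr : 0 < r) (φ : ℕ → ℝ)
    (hφ : ClassW r φ) : ClassW (r ^ N) (fun n => φ (N * n)) := by
  obtain ⟨hpos, hratio, hsum, hconv⟩ := hφ
  have hNtend : Tendsto (N * ·) atTop atTop := tendsto_id.const_mul_atTop' hN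
  refine ⟨fun n => hpos _, ?_, ?_, ?_⟩
  · simpa [Function.comp_def, Nat.mul_sub_one, one_div_pow] using
      (tendsto_div_sub_of_tendsto_div_sub_one hpos hratio N).comp hNtend
  · simpa [Function.comp_def, pow_mul] using hsum.comp_injective (mul_right_injective₀ hN.ne')
  · obtain ⟨E, hE, hnear⟩ := exists_le_mul_of_tendsto_div_sub_one hpos (by positivity) hratio N
    exact squeeze_zero
      (fun m => limsup_nonneg_of_nonneg (convRatio_nonneg (fun _ => (hpos _).le) m))
      (limsup_convRatio_comp_mul_le hN hpos hE hnear) (hconv.comp hNtend)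
end

section
/- Let {U(n)}_{n≥0} be a sequence of d×d real matrices, let N be a positive integer and let 0 < r ≤ 1. Suppose that all the series below converge and that max_{1≤p≤d} ( Σ_{q=1}^d Σ_{i=0}^{N-1} Σ_{l=0}^∞ r^{-N(l+1)} |U(Nl+i)|_{p,q} ) < 1. Define the Nd×Nd matrices B and J(n) (n ≥ 0) by their d×d blocks: (I−B)_{i,j} = 0 for i < j, = I_d for i = j, = −U(i−j−1) for i > j; and J(n)_{i,j} = U(Nn+N+i−j−1) for i ≤ j, = U(N(n+1)+i−j−1) for i > j (i, j ∈ {1,…,N}). Set F(n) := (I−B)^{-1} J(n). Then the series Σ_{i=0}^∞ r^{-N(i+1)} |F(i)| converges entrywise and ‖ Σ_{i=0}^∞ r^{-N(i+1)} |F(i)| ‖_∞ < 1. -/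
/-!
Since `B` is strictly block lower triangular it is nilpotent, so `F(n) = J(n) + B F(n)`. For the
weighted row sums `G(x) = ∑_y ∑_n r^{-N(n+1)} |F(n)|_{x,y}` this gives
`G(x) ≤ G_J(x) + ∑_z |B|_{x,z} G(z)`, where only rows `z` of earlier block rows occur; so by
induction on the block row, `G(x) ≤ G_J(x) + ∑_z |B|_{x,z}` as soon as the right-hand side is
`≤ 1` for every `x`. In block row `i`, as the block column `j` varies, the blocks of `B` and `J(n)`
run through each residue `m ≡ i - j - 1 (mod N)` exactly once: `B` contributes `U(m)` and `J` the
tail `U(N(l+1) + m)`, with weights no larger than in the hypothesis since `r ≤ 1`. Hence that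
right-hand side is at most the hypothesis' row sum, which is `< 1`.
-/

open Finset

namespace Matrix

variable {ι R : Type*} [Fintype ι]

def StrictBlockLowerTriangular [Zero R] (B : Matrix ι ι R) (b : ι → ℕ) : Prop :=
  ∀ ⦃x z⦄, b x ≤ b z → B x z = 0

theorem abs_apply_le_of_eq_add_mul {M P Q R : Matrix ι ι ℝ} (h : M = P + Q * R) (x y : ι) :
    |M x y| ≤ |P x y| + ∑ z, |Q x z| * |R z y| := by
  rw [h, add_apply, mul_apply]
  refine (abs_add_le _ _).trans (add_le_add_right ?_ _)
  exact (abs_sum_le_sum_abs _ _).trans_eq (sum_congr rfl fun z _ => abs_mul _ _)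

variable [DecidableEq ι]

theorem StrictBlockLowerTriangular.pow_apply_eq_zero [Semiring R] {B : Matrix ι ι R} {b : ι → ℕ}
    (hB : B.StrictBlockLowerTriangular b) {k : ℕ} {x y : ι} (h : b x < b y + k) :
    (B ^ k) x y = 0 := by
  induction k generalizing y with
  | zero =>
    rw [pow_zero, one_apply_ne]
    rintro rfl
    omega
  | succ k ih =>
    rw [pow_succ, mul_apply]
    refine sum_eq_zero fun z _ => ?_
    by_cases hz : b x < b z + k
    · rw [ih hz, zero_mul]
    · rw [hB (by omega), mul_zero]

theorem StrictBlockLowerTriangular.isNilpotent [Semiring R] {B : Matrix ι ι R} {b : ι → ℕ}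
    (hB : B.StrictBlockLowerTriangular b) : IsNilpotent B :=
  ⟨univ.sup b + 1, by
    ext x y
    exact hB.pow_apply_eq_zero (Nat.lt_succ_of_le ((le_sup (mem_univ x)).trans le_add_self))⟩

theorem eq_add_mul_of_eq_inv_one_sub_mul [CommRing R] {B J F : Matrix ι ι R}
    (hB : IsNilpotent B) (hF : F = (1 - B)⁻¹ * J) : F = J + B * F := by
  have hJ : (1 - B) * F = J := by
    rw [hF]
    exact mul_nonsing_inv_cancel_left _ _ ((isUnit_iff_isUnit_det _).mp hB.isUnit_one_sub)
  rw [← hJ, sub_mul, one_mul, sub_add_cancel]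

end Matrix

noncomputable def weightedRowSum {ι : Type*} [Fintype ι] (F : ℕ → Matrix ι ι ℝ) (w : ℕ → ℝ)
    (x : ι) : ℝ :=
  ∑ y, ∑' n, |F n x y| / w n

section WeightedRowSum

open Matrix

variable {ι : Type*} [Fintype ι] {b : ι → ℕ} {B : Matrix ι ι ℝ} {J F : ℕ → Matrix ι ι ℝ}
  {w : ℕ → ℝ}

theorem abs_div_le_of_eq_add_mul (hrec : ∀ n, F n = J n + B * F n) (hw : ∀ n, 0 ≤ w n)
    (n : ℕ) (x y : ι) :
    |F n x y| / w n ≤ |J n x y| / w n + ∑ z, |B x z| * (|F n z y| / w n) := by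
  calc |F n x y| / w n ≤ (|J n x y| + ∑ z, |B x z| * |F n z y|) / w n :=
        div_le_div_of_nonneg_right (abs_apply_le_of_eq_add_mul (hrec n) x y) (hw n)
    _ = _ := by simp only [add_div, sum_div, mul_div_assoc]

theorem summable_abs_div_of_strictBlockLowerTriangular (hB : B.StrictBlockLowerTriangular b)
    (hrec : ∀ n, F n = J n + B * F n) (hw : ∀ n, 0 ≤ w n)
    (hJ : ∀ x y, Summable fun n => |J n x y| / w n) (x y : ι) :
    Summable fun n => |F n x y| / w n := by
  induction hx : b x using Nat.strong_induction_on generalizing x with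
  | _ k ih =>
    refine .of_nonneg_of_le (fun n => div_nonneg (abs_nonneg _) (hw n))
      (abs_div_le_of_eq_add_mul hrec hw · x y) ((hJ x y).add (summable_sum fun z _ => ?_))
    by_cases hz : b z < k
    · exact (ih _ hz z rfl).mul_left _
    · simp [hB (hx ▸ not_lt.mp hz : b x ≤ b z)]

theorem weightedRowSum_le_add (hrec : ∀ n, F n = J n + B * F n) (hw : ∀ n, 0 ≤ w n)
    (hJ : ∀ x y, Summable fun n => |J n x y| / w n)
    (hF : ∀ x y, Summable fun n => |F n x y| / w n) (x : ι) :
    weightedRowSum F w x ≤ weightedRowSum J w x + ∑ z, |B x z| * weightedRowSum F w z := by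
  have hBF : ∀ y, Summable fun n => ∑ z, |B x z| * (|F n z y| / w n) :=
    fun y => summable_sum fun z _ => (hF z y).mul_left _
  have hcol : ∀ y, ∑' n, |F n x y| / w n ≤
      ∑' n, |J n x y| / w n + ∑ z, |B x z| * ∑' n, |F n z y| / w n := fun y =>
    calc ∑' n, |F n x y| / w n
        ≤ ∑' n, (|J n x y| / w n + ∑ z, |B x z| * (|F n z y| / w n)) :=
          (hF x y).tsum_le_tsum (abs_div_le_of_eq_add_mul hrec hw · x y) ((hJ x y).add (hBF y))
      _ = _ := by
          rw [(hJ x y).tsum_add (hBF y),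
            Summable.tsum_finsetSum fun z _ => (hF z y).mul_left _]
          simp only [tsum_mul_left]
  calc weightedRowSum F w x ≤ ∑ y, (∑' n, |J n x y| / w n +
        ∑ z, |B x z| * ∑' n, |F n z y| / w n) := sum_le_sum fun y _ => hcol y
    _ = _ := by
      rw [sum_add_distrib, sum_comm]
      simp only [weightedRowSum, mul_sum]

theorem weightedRowSum_le_of_strictBlockLowerTriangular (hB : B.StrictBlockLowerTriangular b)
    (hrec : ∀ n, F n = J n + B * F n) (hw : ∀ n, 0 ≤ w n)
    (hJ : ∀ x y, Summable fun n => |J n x y| / w n)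
    (hrow : ∀ x, weightedRowSum J w x + ∑ z, |B x z| ≤ 1) (x : ι) :
    weightedRowSum F w x ≤ weightedRowSum J w x + ∑ z, |B x z| := by
  have hF := summable_abs_div_of_strictBlockLowerTriangular hB hrec hw hJ
  induction hx : b x using Nat.strong_induction_on generalizing x with
  | _ k ih =>
    refine (weightedRowSum_le_add hrec hw hJ hF x).trans (add_le_add_right ?_ _)
    refine sum_le_sum fun z _ => ?_
    by_cases hz : b z < k
    · exact mul_le_of_le_one_right (abs_nonneg _) ((ih _ hz z rfl).trans (hrow z))
    · simp [hB (hx ▸ not_lt.mp hz : b x ≤ b z)]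

end WeightedRowSum

theorem add_tsum_le_tsum_of_le_shift {f g : ℕ → ℝ} {a : ℝ} (hf : Summable f)
    (hg : ∀ n, 0 ≤ g n) (ha : a ≤ f 0) (hgf : ∀ n, g n ≤ f (n + 1)) :
    Summable g ∧ a + ∑' n, g n ≤ ∑' n, f n := by
  have hf1 : Summable fun n => f (n + 1) := (summable_nat_add_iff 1).mpr hf
  have hgs : Summable g := .of_nonneg_of_le hg hgf hf1
  refine ⟨hgs, ?_⟩
  rw [hf.tsum_eq_zero_add]
  exact add_le_add ha (hgs.tsum_le_tsum hgf hf1)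

theorem abs_div_pow_le_abs_div_pow {r : ℝ} (hr0 : 0 < r) (hr1 : r ≤ 1) (x : ℝ) {a b : ℕ}
    (h : a ≤ b) :
    |x| / r ^ a ≤ |x| / r ^ b :=
  div_le_div_of_nonneg_left (abs_nonneg x) (pow_pos hr0 b) (pow_le_pow_of_le_one hr0.le hr1 h)

/-- In block row `i`, the blocks of `J n` and of `B` in block column `j` are `U` at indices
congruent to `i - j - 1` modulo `N`; `blockLag i j` is that residue. -/
def blockLag {N : ℕ} (i j : Fin N) : Fin N :=
  ⟨if (j : ℕ) < i then i - j - 1 else N + i - j - 1, by split_ifs <;> omega⟩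

theorem blockLag_injective {N : ℕ} (i : Fin N) : Function.Injective (blockLag i) := by
  intro j k h
  simp only [blockLag, Fin.mk.injEq] at h
  ext
  split_ifs at h <;> omega

section Blocks

variable {d N : ℕ} {r : ℝ} {U : ℕ → Matrix (Fin d) (Fin d) ℝ}
  {B : Matrix (Fin N × Fin d) (Fin N × Fin d) ℝ} {J : ℕ → Matrix (Fin N × Fin d) (Fin N × Fin d) ℝ}

theorem apply_eq_of_one_sub_apply_eq
    (hB : ∀ (i j : Fin N) (p q : Fin d),
      (1 - B) (i, p) (j, q) =
        if (i : ℕ) < (j : ℕ) then 0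
        else if (i : ℕ) = (j : ℕ) then (1 : Matrix (Fin d) (Fin d) ℝ) p q
        else -U ((i : ℕ) - (j : ℕ) - 1) p q)
    (i j : Fin N) (p q : Fin d) :
    B (i, p) (j, q) = if (j : ℕ) < i then U (i - j - 1) p q else 0 := by
  have h := hB i j p q
  rw [Matrix.sub_apply, Matrix.one_apply, Matrix.one_apply] at h
  simp only [Prod.mk.injEq, Fin.ext_iff] at h
  split_ifs at h ⊢ <;> first | omega | linarith

theorem summable_and_tsum_add_abs_le
    (hr0 : 0 < r) (hr1 : r ≤ 1)
    (hsum : ∀ (p q : Fin d) (i : ℕ), i < N →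
      Summable (fun l : ℕ => |U (N * l + i) p q| / r ^ (N * (l + 1))))
    (hB : ∀ (i j : Fin N) (p q : Fin d),
      B (i, p) (j, q) = if (j : ℕ) < i then U (i - j - 1) p q else 0)
    (hJ : ∀ (n : ℕ) (i j : Fin N) (p q : Fin d),
      J n (i, p) (j, q) =
        if (i : ℕ) ≤ (j : ℕ) then U (N * n + N + (i : ℕ) - (j : ℕ) - 1) p q
        else U (N * (n + 1) + (i : ℕ) - (j : ℕ) - 1) p q)
    (i j : Fin N) (p q : Fin d) :
    Summable (fun n => |J n (i, p) (j, q)| / r ^ (N * (n + 1))) ∧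
      ∑' n, |J n (i, p) (j, q)| / r ^ (N * (n + 1)) + |B (i, p) (j, q)| ≤
        ∑' l, |U (N * l + blockLag i j) p q| / r ^ (N * (l + 1)) := by
  have hu := hsum p q (blockLag i j) (blockLag i j).isLt
  by_cases hji : (j : ℕ) < i
  · set m := (i : ℕ) - j - 1
    have hlag : (blockLag i j : ℕ) = m := if_pos hji
    have hJm : ∀ n, J n (i, p) (j, q) = U (N * (n + 1) + m) p q := fun n => by
      rw [hJ, if_neg (by omega), show N * (n + 1) + i - j - 1 = N * (n + 1) + m by omega]
    rw [hlag] at hu ⊢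
    simp only [hJm, hB, if_pos hji, add_comm (∑' n, _)]
    refine add_tsum_le_tsum_of_le_shift hu (fun n => by positivity) ?_ fun n => ?_
    · simpa using abs_div_pow_le_abs_div_pow hr0 hr1 (U m p q) (Nat.zero_le (N * 1))
    · exact abs_div_pow_le_abs_div_pow hr0 hr1 _ (by gcongr; omega)
  · have hlag : (blockLag i j : ℕ) = N + i - j - 1 := if_neg hji
    have hJm : ∀ n, J n (i, p) (j, q) = U (N * n + blockLag i j) p q := fun n => by
      rw [hJ, if_pos (by omega), hlag]
      congr 2
      omega
    simp only [hJm, hB, if_neg hji, abs_zero, add_zero]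
    exact ⟨hu, le_rfl⟩

theorem weightedRowSum_add_sum_abs_le
    (hr0 : 0 < r) (hr1 : r ≤ 1)
    (hsum : ∀ (p q : Fin d) (i : ℕ), i < N →
      Summable (fun l : ℕ => |U (N * l + i) p q| / r ^ (N * (l + 1))))
    (hB : ∀ (i j : Fin N) (p q : Fin d),
      B (i, p) (j, q) = if (j : ℕ) < i then U (i - j - 1) p q else 0)
    (hJ : ∀ (n : ℕ) (i j : Fin N) (p q : Fin d),
      J n (i, p) (j, q) =
        if (i : ℕ) ≤ (j : ℕ) then U (N * n + N + (i : ℕ) - (j : ℕ) - 1) p q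
        else U (N * (n + 1) + (i : ℕ) - (j : ℕ) - 1) p q)
    (i : Fin N) (p : Fin d) :
    weightedRowSum J (fun n => r ^ (N * (n + 1))) (i, p) + ∑ z, |B (i, p) z| ≤
      ∑ q, ∑ m ∈ range N, ∑' l, |U (N * l + m) p q| / r ^ (N * (l + 1)) := by
  simp only [weightedRowSum, Fintype.sum_prod_type]
  rw [sum_comm (γ := Fin N), sum_comm (γ := Fin N), ← sum_add_distrib]
  refine sum_le_sum fun q _ => ?_
  rw [← sum_add_distrib, ← Fin.sum_univ_eq_sum_range,
    ← (blockLag_injective i).bijective_of_finite.sum_comp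
      fun m : Fin N => ∑' l, |U (N * l + m) p q| / r ^ (N * (l + 1))]
  exact sum_le_sum fun j _ => (summable_and_tsum_add_abs_le hr0 hr1 hsum hB hJ i j p q).2

end Blocks

theorem stmt3_general (d N : ℕ) (r : ℝ) (hr0 : 0 < r) (hr1 : r ≤ 1)
    (U : ℕ → Matrix (Fin d) (Fin d) ℝ)
    (hsum : ∀ (p q : Fin d) (i : ℕ), i < N →
      Summable (fun l : ℕ => |U (N * l + i) p q| / r ^ (N * (l + 1))))
    (hbound : ∀ p : Fin d,
      ∑ q : Fin d, ∑ i ∈ Finset.range N,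
        ∑' l : ℕ, |U (N * l + i) p q| / r ^ (N * (l + 1)) < 1)
    (B : Matrix (Fin N × Fin d) (Fin N × Fin d) ℝ)
    (hB : ∀ (i j : Fin N) (p q : Fin d),
      (1 - B) (i, p) (j, q) =
        if (i : ℕ) < (j : ℕ) then 0
        else if (i : ℕ) = (j : ℕ) then (1 : Matrix (Fin d) (Fin d) ℝ) p q
        else -U ((i : ℕ) - (j : ℕ) - 1) p q)
    (J : ℕ → Matrix (Fin N × Fin d) (Fin N × Fin d) ℝ)
    (hJ : ∀ (n : ℕ) (i j : Fin N) (p q : Fin d),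
      J n (i, p) (j, q) =
        if (i : ℕ) ≤ (j : ℕ) then U (N * n + N + (i : ℕ) - (j : ℕ) - 1) p q
        else U (N * (n + 1) + (i : ℕ) - (j : ℕ) - 1) p q)
    (F : ℕ → Matrix (Fin N × Fin d) (Fin N × Fin d) ℝ)
    (hF : ∀ n, F n = (1 - B)⁻¹ * J n) :
    (∀ x y : Fin N × Fin d, Summable (fun n : ℕ => |F n x y| / r ^ (N * (n + 1)))) ∧
    ∀ x : Fin N × Fin d,
      ∑ y : Fin N × Fin d, ∑' n : ℕ, |F n x y| / r ^ (N * (n + 1)) < 1 := by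
  have hBapply := apply_eq_of_one_sub_apply_eq hB
  have hstrict : B.StrictBlockLowerTriangular fun x => (x.1 : ℕ) := by
    rintro ⟨i, p⟩ ⟨j, q⟩ h
    rw [hBapply, if_neg (not_lt.mpr h)]
  have hrec n : F n = J n + B * F n :=
    Matrix.eq_add_mul_of_eq_inv_one_sub_mul hstrict.isNilpotent (hF n)
  have hw n : 0 ≤ r ^ (N * (n + 1)) := by positivity
  have hJsum : ∀ x y, Summable fun n => |J n x y| / r ^ (N * (n + 1)) :=
    fun ⟨i, p⟩ ⟨j, q⟩ => (summable_and_tsum_add_abs_le hr0 hr1 hsum hBapply hJ i j p q).1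
  have hrow x : weightedRowSum J (fun n => r ^ (N * (n + 1))) x + ∑ z, |B x z| < 1 :=
    (weightedRowSum_add_sum_abs_le hr0 hr1 hsum hBapply hJ x.1 x.2).trans_lt (hbound x.2)
  refine ⟨summable_abs_div_of_strictBlockLowerTriangular hstrict hrec hw hJsum, fun x => ?_⟩
  exact (weightedRowSum_le_of_strictBlockLowerTriangular hstrict hrec hw hJsum
    (fun x => (hrow x).le) x).trans_lt (hrow x)

/-- Lemma 2.6 of the paper: the weighted row sums of `F(n) = (I-B)⁻¹ J(n)` are
strictly bounded by 1 under the smallness condition on `U`. -/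
theorem stmt3 (d N : ℕ) (hd : 0 < d) (hN : 0 < N) (r : ℝ) (hr0 : 0 < r) (hr1 : r ≤ 1)
    (U : ℕ → Matrix (Fin d) (Fin d) ℝ)
    (hsum : ∀ (p q : Fin d) (i : ℕ), i < N →
      Summable (fun l : ℕ => |U (N * l + i) p q| / r ^ (N * (l + 1))))
    (hbound : ∀ p : Fin d,
      ∑ q : Fin d, ∑ i ∈ Finset.range N,
        ∑' l : ℕ, |U (N * l + i) p q| / r ^ (N * (l + 1)) < 1)
    (B : Matrix (Fin N × Fin d) (Fin N × Fin d) ℝ)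
    (hB : ∀ (i j : Fin N) (p q : Fin d),
      (1 - B) (i, p) (j, q) =
        if (i : ℕ) < (j : ℕ) then 0
        else if (i : ℕ) = (j : ℕ) then (1 : Matrix (Fin d) (Fin d) ℝ) p q
        else -U ((i : ℕ) - (j : ℕ) - 1) p q)
    (J : ℕ → Matrix (Fin N × Fin d) (Fin N × Fin d) ℝ)
    (hJ : ∀ (n : ℕ) (i j : Fin N) (p q : Fin d),
      J n (i, p) (j, q) =
        if (i : ℕ) ≤ (j : ℕ) then U (N * n + N + (i : ℕ) - (j : ℕ) - 1) p q
        else U (N * (n + 1) + (i : ℕ) - (j : ℕ) - 1) p q)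
    (F : ℕ → Matrix (Fin N × Fin d) (Fin N × Fin d) ℝ)
    (hF : ∀ n, F n = (1 - B)⁻¹ * J n) :
    (∀ x y : Fin N × Fin d, Summable (fun n : ℕ => |F n x y| / r ^ (N * (n + 1)))) ∧
    ∀ x : Fin N × Fin d,
      ∑ y : Fin N × Fin d, ∑' n : ℕ, |F n x y| / r ^ (N * (n + 1)) < 1 :=
  stmt3_general d N r hr0 hr1 U hsum hbound B hB J hJ F hF
end

section
/- Let U : ℕ → ℝ^{d×d}, let N be a positive integer, let 0 < r ≤ 1, and let Z be the resolvent of U. Suppose all the series below converge and max_{1≤p≤d} ( Σ_{q=1}^d Σ_{i=0}^{N-1} Σ_{l=0}^∞ r^{-N(l+1)} |U(Nl+i)|_{p,q} ) < 1. Then the series Σ_{i=0}^{N-1} Σ_{n=0}^∞ r^{-N(n+1)} |Z(Nn+i)| converges entrywise, and setting A := Σ_{i=0}^{N-1} Σ_{n=0}^∞ r^{-N(n+1)} |Z(Nn+i)| and B := Σ_{i=0}^{N-1} Σ_{n=0}^∞ r^{-N(n+1)} |U(Nn+i)|, the entrywise inequality A ≤ r^{-N} I + B·A holds. -/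
/-!
With the block weight `w m = r⁻¹ ^ (N * (m / N + 1))`, which satisfies `w (a + b + 1) ≤ w a * w b`
because `r ≤ 1`, the recurrence for `Z` gives, for the weighted partial sums
`S_M p q = ∑ m < M, |Z m p q| * w m`, the entrywise inequality `S_M ≤ w 0 • 1 + B * S_M`, where `B`
is the weighted `ℓ¹` norm of `U`. The rows of `B` sum to less than `1`, so looking at a largest
entry of a column of `S_M` bounds `S_M` uniformly in `M`; hence the weighted series converge and the
inequality passes to the limit. Splitting `ℕ` into the residue classes mod `N` turns the weighted
series into the double sums of the statement.
-/

open Finset Topology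

theorem hasSum_of_hasSum_mul_add {α : Type*} [AddCommMonoid α] [TopologicalSpace α]
    [ContinuousAdd α] {f : ℕ → α} {N : ℕ} (hN : 0 < N) {a : ℕ → α}
    (h : ∀ i < N, HasSum (fun l => f (N * l + i)) (a i)) :
    HasSum f (∑ i ∈ range N, a i) := by
  have hmem {n i : ℕ} (hi : i < N) : n ∈ Set.range (N * · + i) ↔ n % N = i := by
    constructor
    · rintro ⟨l, rfl⟩
      simp [Nat.mod_eq_of_lt hi]
    · rintro rfl
      exact ⟨n / N, Nat.div_add_mod n N⟩
  have hslice (i : ℕ) (hi : i ∈ range N) :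
      HasSum (Set.indicator (Set.range (N * · + i)) f) (a i) := by
    refine (Function.Injective.hasSum_iff (g := (N * · + i)) (fun l l' hl => ?_)
      fun n hn => Set.indicator_of_notMem hn f).1 ?_
    · simpa [hN.ne'] using hl
    · simpa [Function.comp_def] using h i (mem_range.1 hi)
  convert hasSum_sum hslice with n
  have hn : n % N < N := Nat.mod_lt n hN
  rw [sum_eq_single_of_mem (n % N) (mem_range.2 hn) fun i hi hne =>
    Set.indicator_of_notMem (fun h => hne ((hmem (mem_range.1 hi)).1 h).symm) f]
  exact (Set.indicator_of_mem ((hmem hn).2 rfl) f).symm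

noncomputable def blockWeight (r : ℝ) (N m : ℕ) : ℝ := r⁻¹ ^ (N * (m / N + 1))

theorem blockWeight_nonneg {r : ℝ} (hr : 0 ≤ r) (N m : ℕ) : 0 ≤ blockWeight r N m := by
  unfold blockWeight; positivity

theorem blockWeight_zero (r : ℝ) (N : ℕ) : blockWeight r N 0 = (r ^ N)⁻¹ := by
  simp [blockWeight]

theorem blockWeight_mul_add (r : ℝ) {N i : ℕ} (hi : i < N) (l : ℕ) :
    blockWeight r N (N * l + i) = (r ^ (N * (l + 1)))⁻¹ := by
  rw [blockWeight, Nat.mul_add_div (by omega), Nat.div_eq_of_lt hi, add_zero, inv_pow]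

theorem blockWeight_add_add_one_le {r : ℝ} (hr0 : 0 < r) (hr1 : r ≤ 1) (N a b : ℕ) :
    blockWeight r N (a + b + 1) ≤ blockWeight r N a * blockWeight r N b := by
  rw [blockWeight, blockWeight, blockWeight, ← pow_add]
  refine pow_le_pow_right₀ (one_le_inv₀ hr0 |>.2 hr1) ?_
  rcases N.eq_zero_or_pos with rfl | hN
  · simp
  have ha := Nat.lt_mul_div_succ a hN
  have hb := Nat.lt_mul_div_succ b hN
  have hab : (a + b + 1) / N < a / N + b / N + 2 := by
    refine (Nat.div_lt_iff_lt_mul hN).2 ?_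
    nlinarith
  nlinarith

theorem hasSum_mul_blockWeight {r : ℝ} {N : ℕ} (hN : 0 < N) {g : ℕ → ℝ}
    (h : ∀ i < N, Summable fun l => g (N * l + i) / r ^ (N * (l + 1))) :
    HasSum (fun m => g m * blockWeight r N m)
      (∑ i ∈ range N, ∑' l, g (N * l + i) / r ^ (N * (l + 1))) :=
  hasSum_of_hasSum_mul_add hN fun i hi => by
    simpa only [blockWeight_mul_add r hi, div_eq_mul_inv] using (h i hi).hasSum

theorem summable_div_pow_of_summable_mul_blockWeight {r : ℝ} {N i : ℕ} (hi : i < N)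
    {g : ℕ → ℝ} (h : Summable fun m => g m * blockWeight r N m) :
    Summable fun l => g (N * l + i) / r ^ (N * (l + 1)) := by
  have hinj : Function.Injective (N * · + i) := fun l l' hl => by
    simpa [show N ≠ 0 by omega] using hl
  simpa only [Function.comp_def, blockWeight_mul_add r hi, div_eq_mul_inv] using
    h.comp_injective hinj

theorem Matrix.abs_sum_mul_apply_le {R ι κ : Type*} [Fintype ι] [Ring R] [LinearOrder R]
    [IsOrderedRing R] (s : Finset κ) (A B : κ → Matrix ι ι R) (p q : ι) :
    |(∑ j ∈ s, A j * B j) p q| ≤ ∑ j ∈ s, ∑ x, |A j p x| * |B j x q| := by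
  simp only [Matrix.sum_apply, Matrix.mul_apply, ← abs_mul]
  exact (abs_sum_le_sum_abs _ _).trans (sum_le_sum fun j _ => abs_sum_le_sum_abs _ _)

theorem Matrix.abs_one_apply {ι : Type*} [DecidableEq ι] (p q : ι) :
    |(1 : Matrix ι ι ℝ) p q| = (1 : Matrix ι ι ℝ) p q := by
  rw [Matrix.one_apply]; split_ifs <;> simp

theorem Matrix.one_apply_le_one {ι : Type*} [DecidableEq ι] (p q : ι) :
    (1 : Matrix ι ι ℝ) p q ≤ 1 := by
  rw [Matrix.one_apply]; split_ifs <;> simp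

theorem sum_range_sum_mul_le {F G : ℕ → ℝ} (hF : ∀ n, 0 ≤ F n) (hG : ∀ n, 0 ≤ G n)
    (hFs : Summable F) (K : ℕ) :
    ∑ k ∈ range K, ∑ j ∈ range (k + 1), F (k - j) * G j ≤ (∑' n, F n) * ∑ j ∈ range K, G j := by
  rw [sum_range_diag_flip K fun j i => F i * G j, mul_sum]
  gcongr with j
  rw [← sum_mul]
  exact mul_le_mul_of_nonneg_right (hFs.sum_le_tsum _ fun i _ => hF i) (hG j)

theorem exists_forall_le_of_le_add_sum_mul {ι : Type*} [Fintype ι] {T : ι → ι → ℝ}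
    (hT : ∀ p s, 0 ≤ T p s) (hrow : ∀ p, ∑ s, T p s < 1) (c : ℝ) :
    ∃ C, ∀ x : ι → ℝ, (∀ p, 0 ≤ x p) → (∀ p, x p ≤ c + ∑ s, T p s * x s) → ∀ p, x p ≤ C := by
  obtain ⟨β, hβ1, hβ⟩ : ∃ β < 1, ∀ p, ∑ s, T p s ≤ β := by
    have h : ∀ᶠ β in 𝓝[<] (1 : ℝ), β < 1 ∧ ∀ p, ∑ s, T p s ≤ β :=
      eventually_mem_nhdsWithin.and <| Filter.eventually_all.2 fun p =>
        Filter.Eventually.mono (Ioo_mem_nhdsLT (hrow p)) fun _ hβ => hβ.1.le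
    exact h.exists
  refine ⟨c / (1 - β), fun x hx0 hx p => ?_⟩
  have : Nonempty ι := ⟨p⟩
  obtain ⟨p₀, hp₀⟩ := Finite.exists_max x
  have hmax : x p₀ ≤ c + β * x p₀ :=
    calc x p₀ ≤ c + ∑ s, T p₀ s * x s := hx p₀
      _ ≤ c + (∑ s, T p₀ s) * x p₀ := by
        rw [sum_mul]; gcongr with s; exacts [hT p₀ s, hp₀ s]
      _ ≤ c + β * x p₀ := by gcongr; exacts [hx0 p₀, hβ p₀]
  rw [le_div_iff₀ (by linarith)]
  nlinarith [hp₀ p]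

section WeightedResolvent

variable {ι : Type*} [Fintype ι] [DecidableEq ι] {U Z : ℕ → Matrix ι ι ℝ} {w : ℕ → ℝ}

theorem sum_range_abs_mul_le (hw0 : ∀ m, 0 ≤ w m) (hw : ∀ a b, w (a + b + 1) ≤ w a * w b)
    (hZ0 : Z 0 = 1) (hZ : ∀ n, Z (n + 1) = ∑ j ∈ range (n + 1), U (n - j) * Z j)
    (hU : ∀ p s, Summable fun m => |U m p s| * w m) (M : ℕ) (p q : ι) :
    ∑ m ∈ range M, |Z m p q| * w m
      ≤ w 0 * (1 : Matrix ι ι ℝ) p q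
        + ∑ s, (∑' m, |U m p s| * w m) * ∑ m ∈ range M, |Z m s q| * w m := by
  have hstep (k : ℕ) : |Z (k + 1) p q| * w (k + 1)
      ≤ ∑ s, ∑ j ∈ range (k + 1), (|U (k - j) p s| * w (k - j)) * (|Z j s q| * w j) :=
    calc |Z (k + 1) p q| * w (k + 1)
        ≤ (∑ j ∈ range (k + 1), ∑ s, |U (k - j) p s| * |Z j s q|) * w (k + 1) := by
          rw [hZ]; gcongr; exacts [hw0 _, Matrix.abs_sum_mul_apply_le _ _ _ p q]
      _ ≤ ∑ j ∈ range (k + 1), ∑ s, |U (k - j) p s| * |Z j s q| * (w (k - j) * w j) := by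
          rw [sum_mul]
          gcongr with j hj
          rw [sum_mul]
          gcongr with s
          simpa [Nat.sub_add_cancel (mem_range_succ_iff.1 hj)] using hw (k - j) j
      _ = _ := by
          rw [sum_comm]
          exact sum_congr rfl fun s _ => sum_congr rfl fun j _ => by ring
  calc ∑ m ∈ range M, |Z m p q| * w m
      ≤ ∑ m ∈ range (M + 1), |Z m p q| * w m :=
        sum_le_sum_of_subset_of_nonneg (range_subset_range.2 M.le_succ) fun m _ _ =>
          mul_nonneg (abs_nonneg _) (hw0 m)
    _ = w 0 * (1 : Matrix ι ι ℝ) p q + ∑ k ∈ range M, |Z (k + 1) p q| * w (k + 1) := by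
        rw [sum_range_succ', hZ0, Matrix.abs_one_apply, add_comm, mul_comm]
    _ ≤ w 0 * (1 : Matrix ι ι ℝ) p q + ∑ s, ∑ k ∈ range M,
          ∑ j ∈ range (k + 1), (|U (k - j) p s| * w (k - j)) * (|Z j s q| * w j) := by
        rw [sum_comm (s := univ)]; gcongr with k; exact hstep k
    _ ≤ _ := by
        gcongr with s
        exact sum_range_sum_mul_le (fun m => mul_nonneg (abs_nonneg _) (hw0 m))
          (fun m => mul_nonneg (abs_nonneg _) (hw0 m)) (hU p s) M

theorem summable_abs_mul_and_tsum_le (hw0 : ∀ m, 0 ≤ w m)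
    (hw : ∀ a b, w (a + b + 1) ≤ w a * w b)
    (hZ0 : Z 0 = 1) (hZ : ∀ n, Z (n + 1) = ∑ j ∈ range (n + 1), U (n - j) * Z j)
    (hU : ∀ p s, Summable fun m => |U m p s| * w m)
    (hrow : ∀ p, ∑ s, ∑' m, |U m p s| * w m < 1) :
    (∀ p q, Summable fun m => |Z m p q| * w m) ∧
      ∀ p q, ∑' m, |Z m p q| * w m
        ≤ w 0 * (1 : Matrix ι ι ℝ) p q
          + ∑ s, (∑' m, |U m p s| * w m) * ∑' m, |Z m s q| * w m := by
  have hnonneg (V : ℕ → Matrix ι ι ℝ) (p q : ι) (m : ℕ) : 0 ≤ |V m p q| * w m :=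
    mul_nonneg (abs_nonneg _) (hw0 m)
  have hpartial := sum_range_abs_mul_le hw0 hw hZ0 hZ hU
  obtain ⟨C, hC⟩ := exists_forall_le_of_le_add_sum_mul
    (fun p s => tsum_nonneg (hnonneg U p s)) hrow (w 0)
  have hZs (p q : ι) : Summable fun m => |Z m p q| * w m := by
    refine summable_of_sum_range_le (hnonneg Z p q) fun M =>
      hC _ (fun p => sum_nonneg fun m _ => hnonneg Z p q m) (fun p => ?_) p
    refine (hpartial M p q).trans ?_
    gcongr
    exact mul_le_of_le_one_right (hw0 0) (Matrix.one_apply_le_one p q)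
  refine ⟨hZs, fun p q => Real.tsum_le_of_sum_range_le (hnonneg Z p q) fun M =>
    (hpartial M p q).trans ?_⟩
  gcongr with s
  · exact tsum_nonneg (hnonneg U p s)
  · exact (hZs s q).sum_le_tsum _ fun m _ => hnonneg Z s q m

end WeightedResolvent

theorem stmt5_general (d N : ℕ) (hN : 0 < N) (r : ℝ) (hr0 : 0 < r) (hr1 : r ≤ 1)
    (U Z : ℕ → Matrix (Fin d) (Fin d) ℝ)
    (hZ0 : Z 0 = 1)
    (hZ : ∀ n, Z (n + 1) = ∑ j ∈ Finset.range (n + 1), U (n - j) * Z j)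
    (hsum : ∀ (p q : Fin d) (i : ℕ), i < N →
      Summable (fun l : ℕ => |U (N * l + i) p q| / r ^ (N * (l + 1))))
    (hbound : ∀ p : Fin d,
      ∑ q : Fin d, ∑ i ∈ Finset.range N,
        ∑' l : ℕ, |U (N * l + i) p q| / r ^ (N * (l + 1)) < 1) :
    (∀ (p q : Fin d) (i : ℕ), i < N →
      Summable (fun n : ℕ => |Z (N * n + i) p q| / r ^ (N * (n + 1)))) ∧
    ∀ p q : Fin d,
      (∑ i ∈ Finset.range N, ∑' n : ℕ, |Z (N * n + i) p q| / r ^ (N * (n + 1)))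
        ≤ (r ^ N)⁻¹ * (1 : Matrix (Fin d) (Fin d) ℝ) p q
          + ∑ s : Fin d,
              (∑ i ∈ Finset.range N, ∑' n : ℕ, |U (N * n + i) p s| / r ^ (N * (n + 1)))
                * (∑ i ∈ Finset.range N, ∑' n : ℕ, |Z (N * n + i) s q| / r ^ (N * (n + 1))) := by
  have hU (p s : Fin d) := hasSum_mul_blockWeight hN (g := fun m => |U m p s|) (hsum p s)
  obtain ⟨hZs, hZle⟩ := summable_abs_mul_and_tsum_le (blockWeight_nonneg hr0.le N)
    (blockWeight_add_add_one_le hr0 hr1 N) hZ0 hZ (fun p s => (hU p s).summable)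
    (fun p => by simpa only [(hU p _).tsum_eq] using hbound p)
  have hZslice (p q : Fin d) (i : ℕ) (hi : i < N) :=
    summable_div_pow_of_summable_mul_blockWeight hi (g := fun m => |Z m p q|) (hZs p q)
  have hZ' (p q : Fin d) := hasSum_mul_blockWeight hN (g := fun m => |Z m p q|) (hZslice p q)
  refine ⟨hZslice, fun p q => ?_⟩
  simpa only [(hZ' _ _).tsum_eq, (hU _ _).tsum_eq, blockWeight_zero] using hZle p q

/-- Lemma 3.1 of the paper: summability of the resolvent `Z` of `U` and the
entrywise inequality `A ≤ r^{-N} I + B A`. -/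
theorem stmt5 (d N : ℕ) (hd : 0 < d) (hN : 0 < N) (r : ℝ) (hr0 : 0 < r) (hr1 : r ≤ 1)
    (U Z : ℕ → Matrix (Fin d) (Fin d) ℝ)
    (hZ0 : Z 0 = 1)
    (hZ : ∀ n, Z (n + 1) = ∑ j ∈ Finset.range (n + 1), U (n - j) * Z j)
    (hsum : ∀ (p q : Fin d) (i : ℕ), i < N →
      Summable (fun l : ℕ => |U (N * l + i) p q| / r ^ (N * (l + 1))))
    (hbound : ∀ p : Fin d,
      ∑ q : Fin d, ∑ i ∈ Finset.range N,
        ∑' l : ℕ, |U (N * l + i) p q| / r ^ (N * (l + 1)) < 1) :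
    (∀ (p q : Fin d) (i : ℕ), i < N →
      Summable (fun n : ℕ => |Z (N * n + i) p q| / r ^ (N * (n + 1)))) ∧
    ∀ p q : Fin d,
      (∑ i ∈ Finset.range N, ∑' n : ℕ, |Z (N * n + i) p q| / r ^ (N * (n + 1)))
        ≤ (r ^ N)⁻¹ * (1 : Matrix (Fin d) (Fin d) ℝ) p q
          + ∑ s : Fin d,
              (∑ i ∈ Finset.range N, ∑' n : ℕ, |U (N * n + i) p s| / r ^ (N * (n + 1)))
                * (∑ i ∈ Finset.range N, ∑' n : ℕ, |Z (N * n + i) s q| / r ^ (N * (n + 1))) :=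
  stmt5_general d N hN r hr0 hr1 U Z hZ0 hZ hsum hbound
end

section
/- Let λ₁ > 0, let b : {1,2,…} → [0,∞), and let δ : ℕ → ℝ satisfy δ(0) = 1 and δ(n) = λ₁ Σ_{j=0}^{n−1} b(n−j) δ(j) for n ≥ 1. Define S_i := λ₁ Σ_{j=0}^∞ b(2j+i+1) for i ∈ {0,1} and assume S₀ + S₁ < 1. Then δ is nonnegative and summable, and Σ_{j=0}^∞ δ(2j) = (1−S₁)/((1−S₁)² − S₀²) and Σ_{j=0}^∞ δ(2j+1) = S₀/((1−S₁)² − S₀²). -/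
/-!
Writing `a m = λ₁ b m`, the sequence `δ` solves the renewal equation `δ = 1 + a ⋆ δ`, so on the
level of generating functions `D(z) = 1 / (1 - A(z))`. Since `a ≥ 0` has total mass
`A(1) = S₀ + S₁ < 1`, the partial sums of `δ ≥ 0` stay below `1 / (1 - S₀ - S₁)`, and the Cauchy
product gives `D(1) = 1 / (1 - S₀ - S₁)`. Multiplying `a` and `δ` by `(-1)ⁿ` preserves the
renewal equation, so likewise `D(-1) = 1 / (1 - A(-1)) = 1 / (1 + S₀ - S₁)`. The even and odd
sums of `δ` are the half-sum and half-difference of `D(1)` and `D(-1)`.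
-/

open Finset

structure IsResolvent {R : Type*} [Semiring R] (a δ : ℕ → R) : Prop where
  apply_zero : δ 0 = 1
  apply_of_one_le : ∀ n, 1 ≤ n → δ n = ∑ j ∈ range n, a (n - j) * δ j

namespace IsResolvent

section CommRing

variable {R : Type*} [CommRing R] {a δ : ℕ → R}

theorem apply_succ (hδ : IsResolvent a δ) (n : ℕ) :
    δ (n + 1) = ∑ k ∈ range (n + 1), δ k * a (n - k + 1) := by
  rw [hδ.apply_of_one_le (n + 1) n.succ_pos]
  refine sum_congr rfl fun k hk => ?_
  rw [mul_comm, Nat.sub_add_comm (Nat.lt_succ_iff.mp (mem_range.mp hk))]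

theorem neg_one_pow_mul (hδ : IsResolvent a δ) :
    IsResolvent (fun m => (-1) ^ m * a m) (fun n => (-1) ^ n * δ n) where
  apply_zero := by simp [hδ.apply_zero]
  apply_of_one_le n hn := by
    rw [hδ.apply_of_one_le n hn, mul_sum]
    refine sum_congr rfl fun j hj => ?_
    rw [← pow_sub_mul_pow (-1 : R) (mem_range.mp hj).le]
    ring

end CommRing

section Real

variable {a δ : ℕ → ℝ}

theorem nonneg (hδ : IsResolvent a δ) (ha : ∀ m, 0 ≤ a (m + 1)) (n : ℕ) : 0 ≤ δ n := by
  induction n using Nat.strong_induction_on with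
  | _ n ih =>
    cases n with
    | zero => simp [hδ.apply_zero]
    | succ n =>
      rw [hδ.apply_succ]
      exact sum_nonneg fun k hk => mul_nonneg (ih k (mem_range.mp hk)) (ha _)

theorem sum_range_succ_le (hδ : IsResolvent a δ) (ha : ∀ m, 0 ≤ a (m + 1))
    (hsa : Summable fun m => a (m + 1)) (N : ℕ) :
    ∑ n ∈ range (N + 1), δ n ≤ 1 + (∑' m, a (m + 1)) * ∑ n ∈ range N, δ n := by
  calc ∑ n ∈ range (N + 1), δ n
      = 1 + ∑ n ∈ range N, ∑ k ∈ range (n + 1), δ k * a (n - k + 1) := by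
        rw [sum_range_succ', hδ.apply_zero, add_comm]
        simp only [hδ.apply_succ]
    _ = 1 + ∑ m ∈ range N, δ m * ∑ k ∈ range (N - m), a (k + 1) := by
        simp only [sum_range_diag_flip N fun k l => δ k * a (l + 1), mul_sum]
    _ ≤ 1 + ∑ m ∈ range N, δ m * ∑' k, a (k + 1) := by
        gcongr with m
        · exact hδ.nonneg ha m
        · exact hsa.sum_le_tsum _ fun k _ => ha k
    _ = 1 + (∑' m, a (m + 1)) * ∑ n ∈ range N, δ n := by
        rw [mul_sum]
        simp only [mul_comm]

theorem summable (hδ : IsResolvent a δ) (ha : ∀ m, 0 ≤ a (m + 1))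
    (hsa : Summable fun m => a (m + 1)) (hlt : ∑' m, a (m + 1) < 1) : Summable δ := by
  set s := ∑' m, a (m + 1)
  have hs : 0 ≤ s := tsum_nonneg ha
  have h1s : 0 < 1 - s := sub_pos.mpr hlt
  refine summable_of_sum_range_le (c := 1 / (1 - s)) (hδ.nonneg ha) fun N => ?_
  induction N with
  | zero => simp [h1s.le]
  | succ N ih =>
    calc ∑ n ∈ range (N + 1), δ n
        ≤ 1 + s * ∑ n ∈ range N, δ n := hδ.sum_range_succ_le ha hsa N
      _ ≤ 1 + s * (1 / (1 - s)) := by gcongr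
      _ = 1 / (1 - s) := by field_simp; ring

end Real

theorem tsum_eq {R : Type*} [NormedCommRing R] [CompleteSpace R] {a δ : ℕ → R}
    (hδ : IsResolvent a δ) (hδs : Summable fun n => ‖δ n‖)
    (has : Summable fun m => ‖a (m + 1)‖) :
    ∑' n, δ n = 1 + (∑' m, a (m + 1)) * ∑' n, δ n := by
  have hsucc : ∑' n, δ (n + 1) = (∑' n, δ n) * ∑' m, a (m + 1) := by
    rw [tsum_mul_tsum_eq_tsum_sum_range_of_summable_norm hδs has]
    simp only [hδ.apply_succ]
  calc ∑' n, δ n = δ 0 + ∑' n, δ (n + 1) := hδs.of_norm.tsum_eq_zero_add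
    _ = 1 + (∑' m, a (m + 1)) * ∑' n, δ n := by rw [hδ.apply_zero, hsucc, mul_comm]

end IsResolvent

theorem tsum_neg_one_pow_mul_eq_sub {f : ℕ → ℝ} (hf : Summable f) :
    ∑' n, (-1) ^ n * f n = ∑' k, f (2 * k) - ∑' k, f (2 * k + 1) := by
  have hg : Summable fun n => (-1 : ℝ) ^ n * f n :=
    hf.norm.of_norm_bounded fun n => by simp
  have h := tsum_even_add_odd (f := fun n => (-1 : ℝ) ^ n * f n)
    (hg.comp_injective (mul_right_injective₀ two_ne_zero))
    (hg.comp_injective (add_left_injective 1 |>.comp (mul_right_injective₀ two_ne_zero)))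
  simp only [pow_add, pow_mul, neg_one_sq, one_pow, one_mul, pow_one,
    neg_mul, tsum_neg] at h
  rw [← h, sub_eq_add_neg]

/-- Summability of the ARCH(∞) resolvent `δ` and the closed forms of the sums of
its even and odd subsequences. -/
theorem stmt13 (lam : ℝ) (hlam : 0 < lam)
    (b : ℕ → ℝ) (hb : ∀ j, 1 ≤ j → 0 ≤ b j)
    (δ : ℕ → ℝ) (hδ0 : δ 0 = 1)
    (hδ : ∀ n, 1 ≤ n → δ n = lam * ∑ j ∈ Finset.range n, b (n - j) * δ j)
    (hb0 : Summable (fun j : ℕ => b (2 * j + 1)))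
    (hb1 : Summable (fun j : ℕ => b (2 * j + 2)))
    (S₀ S₁ : ℝ)
    (hS₀ : S₀ = lam * ∑' j : ℕ, b (2 * j + 1))
    (hS₁ : S₁ = lam * ∑' j : ℕ, b (2 * j + 2))
    (hS : S₀ + S₁ < 1) :
    (∀ n, 0 ≤ δ n) ∧ Summable δ ∧
    (∑' j : ℕ, δ (2 * j)) = (1 - S₁) / ((1 - S₁) ^ 2 - S₀ ^ 2) ∧
    (∑' j : ℕ, δ (2 * j + 1)) = S₀ / ((1 - S₁) ^ 2 - S₀ ^ 2) := by
  set a : ℕ → ℝ := fun m => lam * b m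
  have hres : IsResolvent a δ :=
    ⟨hδ0, fun n hn => by simp only [a, hδ n hn, mul_sum, mul_assoc]⟩
  have ha : ∀ m, 0 ≤ a (m + 1) := fun m => mul_nonneg hlam.le (hb _ m.succ_pos)
  have hsa : Summable fun m => a (m + 1) :=
    (Summable.even_add_odd (f := fun m => b (m + 1)) hb0 hb1).mul_left lam
  have hsum_a : ∑' m, a (m + 1) = S₀ + S₁ := by
    rw [hS₀, hS₁, tsum_mul_left, ← tsum_even_add_odd (f := fun m => b (m + 1)) hb0 hb1, mul_add]
  have hsum_alt_a : ∑' m, (-1) ^ (m + 1) * a (m + 1) = S₁ - S₀ := by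
    simp only [pow_succ, mul_neg_one, neg_mul, tsum_neg, tsum_neg_one_pow_mul_eq_sub hsa, a,
      tsum_mul_left, hS₀, hS₁]
    ring
  have hδs : Summable δ := hres.summable ha hsa (hsum_a ▸ hS)
  have hEO : ∑' k, δ (2 * k) + ∑' k, δ (2 * k + 1) = ∑' n, δ n :=
    tsum_even_add_odd (f := δ) (hδs.comp_injective (mul_right_injective₀ two_ne_zero))
      (hδs.comp_injective (add_left_injective 1 |>.comp (mul_right_injective₀ two_ne_zero)))
  have hT := hres.tsum_eq hδs.norm hsa.norm
  rw [hsum_a, ← hEO] at hT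
  have hU := hres.neg_one_pow_mul.tsum_eq (by simpa using hδs.norm) (by simpa using hsa.norm)
  rw [hsum_alt_a, tsum_neg_one_pow_mul_eq_sub hδs] at hU
  have hS₀_nonneg : 0 ≤ S₀ := hS₀ ▸ mul_nonneg hlam.le (tsum_nonneg fun j => hb _ (by omega))
  have hD : 0 < (1 - S₁) ^ 2 - S₀ ^ 2 := by nlinarith
  refine ⟨hres.nonneg ha, hδs, ?_, ?_⟩
  · rw [eq_div_iff hD.ne']
    linear_combination (1 - S₁ + S₀) / 2 * hT + (1 - S₁ - S₀) / 2 * hU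
  · rw [eq_div_iff hD.ne']
    linear_combination (1 - S₁ + S₀) / 2 * hT - (1 - S₁ - S₀) / 2 * hU
end

section
/- Let λ₁ > 0, let b : {1,2,…} → [0,∞), and let δ : ℕ → ℝ satisfy δ(0) = 1 and δ(n) = λ₁ Σ_{j=0}^{n−1} b(n−j) δ(j) for n ≥ 1. Let φ be in the class W(1) and be asymptotic to a nonincreasing sequence, and suppose there are a₀ > 0 and a₁ > 0 such that lim_{n→∞} λ₁ b(2n+i+1)/φ(2n) = a_i for i ∈ {0,1}. Define S_i := λ₁ Σ_{j=0}^∞ b(2j+i+1) and assume S₀ + S₁ < 1. Let d₀ := lim_{n→∞} δ(2n)/φ(2n) and d₁ := lim_{n→∞} δ(2n+1)/φ(2n) (which exist), and define χ_δ(u) := Σ_{j=0}^∞ δ(j) δ(j+u) for u ≥ 0. Then lim_{u→∞} χ_δ(2u)/φ(2u) = d₀ Σ_{j=0}^∞ δ(2j) + d₁ Σ_{j=0}^∞ δ(2j+1) and lim_{u→∞} χ_δ(2u+1)/φ(2u) = d₁ Σ_{j=0}^∞ δ(2j) + d₀ Σ_{j=0}^∞ δ(2j+1). -/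
/-
Since `φ` is asymptotic to a nonincreasing sequence, `φ (m + k) ≤ 4 φ m` for all `k` once `m` is
large, so the convergence of `δ (2n) / φ (2n)` and `δ (2n + 1) / φ (2n)` gives a bound
`|δ (m + 2u)| ≤ B φ (2u)` uniform in `m`. This bound makes `δ` absolutely summable (as `φ` is) and
lets one pass to the limit under the sum `χ_δ(2u + s) / φ (2u) = Σ_j δ j · δ (j + 2u + s) / φ (2u)`,
while `φ (n + k) / φ n → 1` identifies the limit of each term: `δ (m + 2u) / φ (2u)` tends to `d₀`
or `d₁` according to the parity of `m`.
-/

open Filter Topology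

namespace ClassW

variable {φ : ℕ → ℝ}

lemma summable (hφ : ClassW 1 φ) : Summable φ := by
  simpa using hφ.2.2.1

lemma tendsto_succ_div (hφ : ClassW 1 φ) : Tendsto (fun n => φ (n + 1) / φ n) atTop (𝓝 1) := by
  have h : Tendsto (fun n => φ n / φ (n + 1)) atTop (𝓝 1) := by
    simpa [Function.comp_def] using hφ.2.1.comp (tendsto_add_atTop_nat 1)
  simpa using h.inv₀ one_ne_zero

end ClassW

lemma tendsto_add_div_of_tendsto_succ_div {φ : ℕ → ℝ} (hφ : ∀ n, φ n ≠ 0)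
    (h : Tendsto (fun n => φ (n + 1) / φ n) atTop (𝓝 1)) (k : ℕ) :
    Tendsto (fun n => φ (n + k) / φ n) atTop (𝓝 1) := by
  induction k with
  | zero => simp [div_self (hφ _)]
  | succ k ih =>
    have h' := (ih.comp (tendsto_add_atTop_nat 1)).mul h
    rw [one_mul] at h'
    refine h'.congr fun n => ?_
    rw [Function.comp_apply, div_mul_div_cancel₀ (hφ (n + 1)), Nat.add_right_comm, add_assoc]

lemma eventually_forall_add_le_four_mul {φ ψ : ℕ → ℝ} (hφ : ∀ n, 0 < φ n) (hψ : Antitone ψ)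
    (h : Tendsto (fun n => φ n / ψ n) atTop (𝓝 1)) :
    ∀ᶠ m in atTop, ∀ k, φ (m + k) ≤ 4 * φ m := by
  have hclose : ∀ᶠ n in atTop, φ n ≤ 2 * ψ n ∧ ψ n ≤ 2 * φ n := by
    filter_upwards [h.eventually_const_lt (by norm_num : (1 : ℝ) / 2 < 1),
      h.eventually_lt_const (by norm_num : (1 : ℝ) < 2)] with n hlo hhi
    have hψn : 0 < ψ n := by
      by_contra! hle
      linarith [div_nonpos_of_nonneg_of_nonpos (hφ n).le hle]
    rw [lt_div_iff₀ hψn] at hlo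
    rw [div_lt_iff₀ hψn] at hhi
    constructor <;> linarith
  obtain ⟨N, hN⟩ := eventually_atTop.mp hclose
  filter_upwards [eventually_ge_atTop N] with m hm k
  linarith [(hN (m + k) (by omega)).1, (hN m hm).2, hψ (Nat.le_add_right m k)]

lemma eventually_abs_le_mul_of_tendsto_div {x w : ℕ → ℝ} {d C : ℝ} (hw : ∀ n, 0 < w n)
    (h : Tendsto (fun n => x n / w n) atTop (𝓝 d)) (hC : |d| < C) :
    ∀ᶠ n in atTop, |x n| ≤ C * w n := by
  filter_upwards [h.abs.eventually_lt_const hC] with n hn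
  rw [abs_div, abs_of_pos (hw n), div_lt_iff₀ (hw n)] at hn
  exact hn.le

lemma tendsto_add_div_of_tendsto_div {x w : ℕ → ℝ} {d : ℝ} (hw : ∀ n, w n ≠ 0) {k : ℕ}
    (hwk : Tendsto (fun n => w (n + k) / w n) atTop (𝓝 1))
    (h : Tendsto (fun n => x n / w n) atTop (𝓝 d)) :
    Tendsto (fun n => x (n + k) / w n) atTop (𝓝 d) := by
  have h' := (h.comp (tendsto_add_atTop_nat k)).mul hwk
  rw [mul_one] at h'
  exact h'.congr fun n => div_mul_div_cancel₀ (hw (n + k))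

lemma tendsto_tsum_mul_add_div {α : Type*} {l : Filter α} {f g c : ℕ → ℝ} {t : α → ℕ}
    {w : α → ℝ} {B : ℝ} (hf : Summable fun n => |f n|) (hw : ∀ u, 0 < w u)
    (hlim : ∀ m, Tendsto (fun u => g (m + t u) / w u) l (𝓝 (c m)))
    (hdom : ∀ᶠ u in l, ∀ m, |g (m + t u)| ≤ B * w u) :
    Tendsto (fun u => (∑' j, f j * g (j + t u)) / w u) l (𝓝 (∑' j, f j * c j)) := by
  have h := tendsto_tsum_of_dominated_convergence (hf.mul_right B)
    (fun j => (hlim j).const_mul (f j)) ?_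
  · refine h.congr fun u => ?_
    simp only [← tsum_div_const, mul_div_assoc]
  · filter_upwards [hdom] with u hu j
    rw [norm_mul, Real.norm_eq_abs, Real.norm_eq_abs, abs_div, abs_of_pos (hw u)]
    gcongr
    rw [div_le_iff₀ (hw u)]
    exact hu j

lemma tsum_mul_ite_even {f : ℕ → ℝ} (hf : Summable f) (c₀ c₁ : ℝ) :
    ∑' j, f j * (if Even j then c₀ else c₁) = c₀ * ∑' j, f (2 * j) + c₁ * ∑' j, f (2 * j + 1) := by
  have h₀ : Summable fun j => f (2 * j) := hf.comp_injective (mul_right_injective₀ two_ne_zero)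
  have h₁ : Summable fun j => f (2 * j + 1) :=
    hf.comp_injective ((add_left_injective 1).comp (mul_right_injective₀ two_ne_zero))
  have he : ∀ j, f (2 * j) * (if Even (2 * j) then c₀ else c₁) = f (2 * j) * c₀ := by simp
  have ho : ∀ j, f (2 * j + 1) * (if Even (2 * j + 1) then c₀ else c₁) = f (2 * j + 1) * c₁ := by
    simp
  rw [← tsum_even_add_odd (f := fun j => f j * (if Even j then c₀ else c₁))
    ((h₀.mul_right c₀).congr fun j => (he j).symm) ((h₁.mul_right c₁).congr fun j => (ho j).symm),
    tsum_congr he, tsum_congr ho, h₀.tsum_mul_right, h₁.tsum_mul_right, mul_comm, mul_comm _ c₁]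

section Parity

variable {δ φ : ℕ → ℝ} {d₀ d₁ : ℝ}

lemma eventually_forall_abs_two_mul_add_le (hφ : ∀ n, 0 < φ n)
    (hd₀ : Tendsto (fun n => δ (2 * n) / φ (2 * n)) atTop (𝓝 d₀))
    (hd₁ : Tendsto (fun n => δ (2 * n + 1) / φ (2 * n)) atTop (𝓝 d₁)) :
    ∀ᶠ n in atTop, ∀ r < 2, |δ (2 * n + r)| ≤ (|d₀| + |d₁| + 1) * φ (2 * n) := by
  have hw : ∀ n, 0 < φ (2 * n) := fun n => hφ _
  have hC₀ : |d₀| < |d₀| + |d₁| + 1 := by linarith [abs_nonneg d₁]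
  have hC₁ : |d₁| < |d₀| + |d₁| + 1 := by linarith [abs_nonneg d₀]
  filter_upwards [eventually_abs_le_mul_of_tendsto_div hw hd₀ hC₀,
    eventually_abs_le_mul_of_tendsto_div hw hd₁ hC₁] with n h₀ h₁ r hr
  interval_cases r
  · exact h₀
  · exact h₁

lemma summable_abs_of_tendsto_div (hφ : ∀ n, 0 < φ n) (hφs : Summable φ)
    (hd₀ : Tendsto (fun n => δ (2 * n) / φ (2 * n)) atTop (𝓝 d₀))
    (hd₁ : Tendsto (fun n => δ (2 * n + 1) / φ (2 * n)) atTop (𝓝 d₁)) :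
    Summable fun n => |δ n| := by
  have hbound := eventually_forall_abs_two_mul_add_le hφ hd₀ hd₁
  have hsum : Summable fun n => (|d₀| + |d₁| + 1) * φ (2 * n) :=
    (hφs.comp_injective (mul_right_injective₀ two_ne_zero)).mul_left _
  refine Summable.even_add_odd (f := fun n => |δ n|) ?_ ?_ <;>
    refine Summable.of_norm_bounded_eventually_nat hsum ?_
  · filter_upwards [hbound] with n hn
    simpa using hn 0 two_pos
  · filter_upwards [hbound] with n hn
    simpa using hn 1 one_lt_two

lemma exists_eventually_forall_abs_add_two_mul_le {ψ : ℕ → ℝ} (hφ : ∀ n, 0 < φ n)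
    (hψ : Antitone ψ) (hφψ : Tendsto (fun n => φ n / ψ n) atTop (𝓝 1))
    (hd₀ : Tendsto (fun n => δ (2 * n) / φ (2 * n)) atTop (𝓝 d₀))
    (hd₁ : Tendsto (fun n => δ (2 * n + 1) / φ (2 * n)) atTop (𝓝 d₁)) :
    ∃ B, ∀ᶠ u in atTop, ∀ m, |δ (m + 2 * u)| ≤ B * φ (2 * u) := by
  set C := |d₀| + |d₁| + 1
  obtain ⟨N, hN⟩ := eventually_atTop.mp (eventually_forall_abs_two_mul_add_le hφ hd₀ hd₁)
  have hmono := (tendsto_id.const_mul_atTop' two_pos).eventually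
    (eventually_forall_add_le_four_mul hφ hψ hφψ)
  refine ⟨4 * C, ?_⟩
  filter_upwards [eventually_ge_atTop N, hmono] with u hu hmu m
  calc |δ (m + 2 * u)| = |δ (2 * (u + m / 2) + m % 2)| := by congr 2; omega
    _ ≤ C * φ (2 * (u + m / 2)) := hN _ (by omega) _ (Nat.mod_lt _ two_pos)
    _ ≤ C * (4 * φ (2 * u)) := by
      gcongr
      simpa [mul_add] using hmu (2 * (m / 2))
    _ = 4 * C * φ (2 * u) := by ring

lemma tendsto_add_two_mul_div (hφ : ∀ n, 0 < φ n)
    (hφ₁ : Tendsto (fun n => φ (n + 1) / φ n) atTop (𝓝 1))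
    (hd₀ : Tendsto (fun n => δ (2 * n) / φ (2 * n)) atTop (𝓝 d₀))
    (hd₁ : Tendsto (fun n => δ (2 * n + 1) / φ (2 * n)) atTop (𝓝 d₁)) (m : ℕ) :
    Tendsto (fun u => δ (m + 2 * u) / φ (2 * u)) atTop (𝓝 (if Even m then d₀ else d₁)) := by
  have hw : ∀ n, φ (2 * n) ≠ 0 := fun n => (hφ _).ne'
  have hwk (k : ℕ) : Tendsto (fun n => φ (2 * (n + k)) / φ (2 * n)) atTop (𝓝 1) := by
    simpa [mul_add, Function.comp_def] using
      (tendsto_add_div_of_tendsto_succ_div (fun n => (hφ n).ne') hφ₁ (2 * k)).comp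
        (tendsto_id.const_mul_atTop' two_pos)
  obtain ⟨k, rfl | rfl⟩ := Nat.even_or_odd' m
  · rw [if_pos (even_two_mul k)]
    exact (tendsto_add_div_of_tendsto_div hw (hwk k) hd₀).congr fun u => by ring_nf
  · rw [if_neg (Nat.not_even_two_mul_add_one k)]
    exact (tendsto_add_div_of_tendsto_div hw (hwk k) hd₁).congr fun u => by ring_nf

end Parity

theorem stmt14_general
    (δ : ℕ → ℝ)
    (φ : ℕ → ℝ) (hφ : ClassW 1 φ)
    (ψ : ℕ → ℝ) (hψ : ∀ n, ψ (n + 1) ≤ ψ n)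
    (hφψ : Tendsto (fun n => φ n / ψ n) atTop (𝓝 1))
    (d₀ d₁ : ℝ)
    (hd₀ : Tendsto (fun n => δ (2 * n) / φ (2 * n)) atTop (𝓝 d₀))
    (hd₁ : Tendsto (fun n => δ (2 * n + 1) / φ (2 * n)) atTop (𝓝 d₁)) :
    Tendsto (fun u => (∑' j : ℕ, δ j * δ (j + 2 * u)) / φ (2 * u)) atTop
      (𝓝 (d₀ * ∑' j : ℕ, δ (2 * j) + d₁ * ∑' j : ℕ, δ (2 * j + 1))) ∧
    Tendsto (fun u => (∑' j : ℕ, δ j * δ (j + (2 * u + 1))) / φ (2 * u)) atTop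
      (𝓝 (d₁ * ∑' j : ℕ, δ (2 * j) + d₀ * ∑' j : ℕ, δ (2 * j + 1))) := by
  have hsum := summable_abs_of_tendsto_div hφ.1 hφ.summable hd₀ hd₁
  have hw : ∀ u, 0 < φ (2 * u) := fun u => hφ.1 _
  have hlim := tendsto_add_two_mul_div hφ.1 hφ.tendsto_succ_div hd₀ hd₁
  obtain ⟨B, hdom⟩ :=
    exists_eventually_forall_abs_add_two_mul_le hφ.1 (antitone_nat_of_succ_le hψ) hφψ hd₀ hd₁
  constructor
  · rw [← tsum_mul_ite_even hsum.of_abs]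
    exact tendsto_tsum_mul_add_div hsum hw hlim hdom
  · have hodd : Tendsto (fun u => (∑' j : ℕ, δ j * δ (j + (2 * u + 1))) / φ (2 * u)) atTop
        (𝓝 (∑' j, δ j * if Even (j + 1) then d₀ else d₁)) := by
      refine tendsto_tsum_mul_add_div (B := B) hsum hw (fun m => ?_) ?_
      · simpa only [← add_assoc, add_right_comm] using hlim (m + 1)
      · filter_upwards [hdom] with u hu m
        simpa only [← add_assoc, add_right_comm] using hu (m + 1)
    simpa only [Nat.even_add_one, ite_not, tsum_mul_ite_even hsum.of_abs] using hodd

/-- Example 4.3 of the paper: asymptotics of `χ_δ(u) = Σ_j δ(j) δ(j+u)` along even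
and odd subsequences relative to the weight `φ`. -/
theorem stmt14 (lam : ℝ) (hlam : 0 < lam)
    (b : ℕ → ℝ) (hb : ∀ j, 1 ≤ j → 0 ≤ b j)
    (δ : ℕ → ℝ) (hδ0 : δ 0 = 1)
    (hδ : ∀ n, 1 ≤ n → δ n = lam * ∑ j ∈ Finset.range n, b (n - j) * δ j)
    (φ : ℕ → ℝ) (hφ : ClassW 1 φ)
    (ψ : ℕ → ℝ) (hψ : ∀ n, ψ (n + 1) ≤ ψ n)
    (hφψ : Tendsto (fun n => φ n / ψ n) atTop (𝓝 1))
    (a₀ a₁ : ℝ) (ha₀ : 0 < a₀) (ha₁ : 0 < a₁)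
    (hlim0 : Tendsto (fun n => lam * b (2 * n + 1) / φ (2 * n)) atTop (𝓝 a₀))
    (hlim1 : Tendsto (fun n => lam * b (2 * n + 2) / φ (2 * n)) atTop (𝓝 a₁))
    (hb0 : Summable (fun j : ℕ => b (2 * j + 1)))
    (hb1 : Summable (fun j : ℕ => b (2 * j + 2)))
    (S₀ S₁ : ℝ)
    (hS₀ : S₀ = lam * ∑' j : ℕ, b (2 * j + 1))
    (hS₁ : S₁ = lam * ∑' j : ℕ, b (2 * j + 2))
    (hS : S₀ + S₁ < 1)
    (d₀ d₁ : ℝ)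
    (hd₀ : Tendsto (fun n => δ (2 * n) / φ (2 * n)) atTop (𝓝 d₀))
    (hd₁ : Tendsto (fun n => δ (2 * n + 1) / φ (2 * n)) atTop (𝓝 d₁)) :
    Tendsto (fun u => (∑' j : ℕ, δ j * δ (j + 2 * u)) / φ (2 * u)) atTop
      (𝓝 (d₀ * ∑' j : ℕ, δ (2 * j) + d₁ * ∑' j : ℕ, δ (2 * j + 1))) ∧
    Tendsto (fun u => (∑' j : ℕ, δ j * δ (j + (2 * u + 1))) / φ (2 * u)) atTop
      (𝓝 (d₁ * ∑' j : ℕ, δ (2 * j) + d₀ * ∑' j : ℕ, δ (2 * j + 1))) :=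
  stmt14_general δ φ hφ ψ hψ hφψ d₀ d₁ hd₀ hd₁
end
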